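/- arXiv:math/0306105 — 6 statements merged into one kernel-verified Lean document; each statement's English description precedes it below -/
import Mathlib

section
/- In the dihedral group D of order 4(g-1) with presentation ⟨a, b ∣ a^{2(g-1)} = b² = (ab)² = 1⟩, where g ≥ 2 is an integer, the five elements x₁ = ab, x₂ = b, x₃ = a^{g-2}b, x₄ = b, x₅ = a^{g-1} each have order exactly 2, satisfy x₁x₂x₃x₄x₅ = 1, and together generate D. -/
open DihedralGroup

/-- In the dihedral group of order `4(g-1)` with `g ≥ 2`, the elements
`x₁ = ab, x₂ = b, x₃ = a^(g-2) b, x₄ = b, x₅ = a^(g-1)` each have order 2,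
their product is 1, and they generate the group. -/
theorem stmt0 (g : ℕ) (hg : 2 ≤ g) :
    ∀ a b : DihedralGroup (2 * (g - 1)), a = DihedralGroup.r 1 → b = DihedralGroup.sr 0 →
    ∀ x₁ x₂ x₃ x₄ x₅ : DihedralGroup (2 * (g - 1)),
      x₁ = a * b → x₂ = b → x₃ = a ^ (g - 2) * b → x₄ = b → x₅ = a ^ (g - 1) →
      (orderOf x₁ = 2 ∧ orderOf x₂ = 2 ∧ orderOf x₃ = 2 ∧ orderOf x₄ = 2 ∧ orderOf x₅ = 2) ∧
      x₁ * x₂ * x₃ * x₄ * x₅ = 1 ∧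
      Subgroup.closure {x₁, x₂, x₃, x₄, x₅} = ⊤ := by
  intro a b ha hb x₁ x₂ x₃ x₄ x₅ h1 h2 h3 h4 h5
  subst ha hb h1 h2 h3 h4 h5
  set n := 2 * (g - 1) with hn
  have hnpos : 0 < n := by omega
  haveI : NeZero n := ⟨hnpos.ne'⟩
  have hcast : ((g - 1 : ℕ) : ZMod n) ≠ 0 := by
    intro h
    rw [ZMod.natCast_eq_zero_iff] at h
    have := Nat.le_of_dvd (by omega) h
    omega
  have hord5 : orderOf (r ((g - 1 : ℕ) : ZMod n) : DihedralGroup n) = 2 := by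
    apply orderOf_eq_prime
    · rw [sq, r_mul_r, ← Nat.cast_add, show g - 1 + (g - 1) = n by omega,
        ZMod.natCast_self, one_def]
    · rw [one_def, ne_eq, r.injEq]
      exact hcast
  refine ⟨⟨?_, orderOf_sr 0, ?_, orderOf_sr 0, ?_⟩, ?_, ?_⟩
  · rw [r_mul_sr]; exact orderOf_sr _
  · rw [r_one_pow, r_mul_sr]; exact orderOf_sr _
  · rw [r_one_pow]; exact hord5
  · simp only [r_one_pow, r_mul_sr, sr_mul_sr, sr_mul_r, r_mul_r]
    rw [one_def, r.injEq]
    have key : ((1 + (g - 2) + (g - 1) : ℕ) : ZMod n) = 0 := by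
      rw [show 1 + (g - 2) + (g - 1) = n by omega]; exact ZMod.natCast_self n
    push_cast at key
    linear_combination key
  · rw [eq_top_iff]
    intro x _
    simp only [r_one_pow, r_mul_sr]
    set S : Set (DihedralGroup n) :=
      {sr (0 - 1), sr 0, sr (0 - ((g - 2 : ℕ) : ZMod n)), sr 0, r ((g - 1 : ℕ) : ZMod n)} with hS
    have hb : (sr 0 : DihedralGroup n) ∈ Subgroup.closure S :=
      Subgroup.subset_closure (by simp [hS])
    have hx1 : (sr (0 - 1) : DihedralGroup n) ∈ Subgroup.closure S :=
      Subgroup.subset_closure (by simp [hS])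
    have ha : (r 1 : DihedralGroup n) ∈ Subgroup.closure S := by
      have := mul_mem hx1 hb
      rwa [sr_mul_sr, sub_sub_cancel] at this
    rcases x with i | i
    · have : (r i : DihedralGroup n) = (r 1) ^ i.val := by
        rw [r_one_pow, ZMod.natCast_val, ZMod.cast_id]
      rw [this]; exact pow_mem ha _
    · have : (sr i : DihedralGroup n) = sr 0 * (r 1) ^ i.val := by
        rw [r_one_pow, sr_mul_r, zero_add, ZMod.natCast_val, ZMod.cast_id]
      rw [this]; exact mul_mem hb (pow_mem ha _)
end

section
/- For every integer g ≥ 2 there exists a surjective group homomorphism from the group Γ = ⟨γ₁,…,γ₅ ∣ γⱼ² = 1 (j = 1,…,5), γ₁γ₂γ₃γ₄γ₅ = 1⟩ onto the dihedral group of order 4(g-1) such that the image of each generator γⱼ has order exactly 2. -/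
/-!
A group receives a homomorphism from `Γ` mapping the generators to involutions exactly when it
contains five involutions with product one, and the homomorphism is onto when they generate.
In the dihedral group of order `4m` take the reflections `sr 0, sr 1, sr 0, sr (m - 1)` and the
half-turn `r m`: the first two already generate, and the product of the first four is the
half-turn, which is its own inverse.
-/

/-- Relations of the Fuchsian group of signature (2,2,2,2,2):
the squares of the five generators and their product. -/
def rels22222 : Set (FreeGroup (Fin 5)) :=
  {w | ∃ j : Fin 5, w = FreeGroup.of j ^ 2} ∪
  {FreeGroup.of 0 * FreeGroup.of 1 * FreeGroup.of 2 * FreeGroup.of 3 * FreeGroup.of 4}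

theorem PresentedGroup.range_toGroup {G α : Type*} [Group G] {rels : Set (FreeGroup α)}
    {f : α → G} (h : ∀ r ∈ rels, FreeGroup.lift f r = 1) :
    (toGroup h).range = Subgroup.closure (Set.range f) := by
  rw [MonoidHom.range_eq_map, ← closure_range_of, MonoidHom.map_closure, ← Set.range_comp]
  congr 2
  ext x
  exact toGroup.of h

theorem exists_surjective_of_involutions {G : Type*} [Group G] (x : Fin 5 → G)
    (hx : ∀ j, orderOf (x j) = 2) (hprod : x 0 * x 1 * x 2 * x 3 * x 4 = 1)
    (hgen : Subgroup.closure (Set.range x) = ⊤) :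
    ∃ f : PresentedGroup rels22222 →* G,
      Function.Surjective f ∧ ∀ j, orderOf (f (PresentedGroup.of j)) = 2 := by
  have hrels : ∀ w ∈ rels22222, FreeGroup.lift x w = 1 := by
    rintro w (⟨j, rfl⟩ | rfl)
    · simp [← hx j, pow_orderOf_eq_one]
    · simpa using hprod
  refine ⟨PresentedGroup.toGroup hrels, ?_, fun j => by rw [PresentedGroup.toGroup.of, hx]⟩
  rw [← MonoidHom.range_eq_top, PresentedGroup.range_toGroup, hgen]

namespace DihedralGroup

theorem closure_sr_zero_sr_one (n : ℕ) :
    Subgroup.closure {sr 0, sr 1} = (⊤ : Subgroup (DihedralGroup n)) := by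
  set H := Subgroup.closure {(sr 0 : DihedralGroup n), sr 1}
  have h0 : sr 0 ∈ H := Subgroup.subset_closure (by simp)
  have hr : ∀ i : ZMod n, r i ∈ H := by
    intro i
    obtain ⟨k, rfl⟩ := ZMod.intCast_surjective i
    have h1 : r 1 ∈ H := by
      simpa [sr_mul_sr] using H.mul_mem h0 (Subgroup.subset_closure (Set.mem_insert_of_mem _ rfl))
    simpa [r_one_zpow] using H.zpow_mem h1 k
  refine eq_top_iff.2 fun x _ => ?_
  cases x with
  | r i => exact hr i
  | sr i => simpa [sr_mul_r] using H.mul_mem h0 (hr i)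

theorem orderOf_r_natCast_self {m : ℕ} (hm : m ≠ 0) :
    orderOf (r (m : ZMod (2 * m))) = 2 := by
  have : NeZero (2 * m) := ⟨by omega⟩
  rw [orderOf_r, ZMod.val_natCast, Nat.mod_eq_of_lt (by omega), Nat.gcd_mul_left_left,
    Nat.mul_div_cancel _ (Nat.pos_of_ne_zero hm)]

def involutionTuple (m : ℕ) : Fin 5 → DihedralGroup (2 * m) :=
  ![sr 0, sr 1, sr 0, sr ((m : ZMod (2 * m)) - 1), r m]

theorem involutionTuple_prod (m : ℕ) :
    involutionTuple m 0 * involutionTuple m 1 * involutionTuple m 2 * involutionTuple m 3 *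
      involutionTuple m 4 = 1 := by
  have h : (m : ZMod (2 * m)) + m = 0 := by
    simpa [two_mul] using ZMod.natCast_self (2 * m)
  simp [involutionTuple, sr_mul_sr, r_mul_sr, r_mul_r, h, one_def, -r_zero]

theorem orderOf_involutionTuple {m : ℕ} (hm : m ≠ 0) (j : Fin 5) :
    orderOf (involutionTuple m j) = 2 := by
  fin_cases j <;> simp [involutionTuple, orderOf_sr, orderOf_r_natCast_self hm]

theorem closure_range_involutionTuple (m : ℕ) :
    Subgroup.closure (Set.range (involutionTuple m)) = ⊤ := by
  refine eq_top_iff.2 ((closure_sr_zero_sr_one _).ge.trans (Subgroup.closure_mono ?_))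
  rintro _ (rfl | rfl)
  exacts [⟨0, rfl⟩, ⟨1, rfl⟩]

end DihedralGroup

/-- For every `g ≥ 2` there is a surjective homomorphism from the group
`⟨γ₁,…,γ₅ ∣ γⱼ² = 1, γ₁⋯γ₅ = 1⟩` onto the dihedral group of order `4(g-1)`
mapping each generator to an element of order exactly 2. -/
theorem stmt1 (g : ℕ) (hg : 2 ≤ g) :
    ∃ f : PresentedGroup rels22222 →* DihedralGroup (2 * (g - 1)),
      Function.Surjective f ∧ ∀ j : Fin 5, orderOf (f (PresentedGroup.of j)) = 2 :=
  exists_surjective_of_involutions (DihedralGroup.involutionTuple (g - 1))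
    (DihedralGroup.orderOf_involutionTuple (by omega)) (DihedralGroup.involutionTuple_prod _)
    (DihedralGroup.closure_range_involutionTuple _)
end

section
/- Let g and k be nonnegative integers, and let m₁,…,m_k be integers with each mⱼ ≥ 2. If 2g − 2 + ∑_{j=1}^{k}(1 − 1/mⱼ) is strictly between 0 and 1/2, then g = 0 and k ∈ {3, 4}. -/
/-- If the normalized measure `2g - 2 + ∑ (1 - 1/mⱼ)` of a Fuchsian signature
(all periods `mⱼ ≥ 2`) lies strictly between 0 and 1/2, then `g = 0` and `k ∈ {3, 4}`. -/
theorem stmt6 (g k : ℕ) (m : Fin k → ℕ) (hm : ∀ j, 2 ≤ m j)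
    (h0 : (0 : ℝ) < 2 * (g : ℝ) - 2 + ∑ j, (1 - 1 / (m j : ℝ)))
    (h1 : 2 * (g : ℝ) - 2 + ∑ j, (1 - 1 / (m j : ℝ)) < 1 / 2) :
    g = 0 ∧ (k = 3 ∨ k = 4) := by
  set S : ℝ := ∑ j, (1 - 1 / (m j : ℝ)) with hS
  have hlow : (k : ℝ) / 2 ≤ S := by
    have : ∑ _j : Fin k, (1/2 : ℝ) ≤ S := by
      apply Finset.sum_le_sum
      intro j _
      have hm2 : (2 : ℝ) ≤ (m j : ℝ) := by exact_mod_cast hm j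
      have : 1 / (m j : ℝ) ≤ 1 / 2 := by
        apply one_div_le_one_div_of_le <;> linarith
      linarith
    simpa [div_eq_mul_inv, mul_comm] using this
  have hup : S ≤ (k : ℝ) := by
    have : S ≤ ∑ _j : Fin k, (1 : ℝ) := by
      apply Finset.sum_le_sum
      intro j _
      have hm2 : (2 : ℝ) ≤ (m j : ℝ) := by exact_mod_cast hm j
      have : 0 < 1 / (m j : ℝ) := by positivity
      linarith
    simpa using this
  have hg : g = 0 := by
    by_contra hg
    have hg1 : (1 : ℝ) ≤ (g : ℝ) := by
      exact_mod_cast Nat.one_le_iff_ne_zero.mpr hg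
    have hSlt : S < 1/2 := by linarith
    have hk0 : k = 0 := by
      by_contra hk
      have : (1 : ℝ) ≤ (k : ℝ) := by
        exact_mod_cast Nat.one_le_iff_ne_zero.mpr hk
      linarith
    subst hk0
    simp only [Finset.univ_eq_empty, Finset.sum_empty, hS] at h0 h1 hSlt
    have ha : (1 : ℝ) < (g : ℝ) := by linarith
    have hb : (g : ℝ) < 2 := by linarith
    have ha' : 1 < g := by exact_mod_cast ha
    have hb' : g < 2 := by exact_mod_cast hb
    omega
  subst hg
  refine ⟨rfl, ?_⟩
  simp only [Nat.cast_zero, mul_zero, zero_sub] at h0 h1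
  have hk3 : (2 : ℝ) < (k : ℝ) := by linarith
  have hk4 : (k : ℝ) < 5 := by linarith
  have h3 : 2 < k := by exact_mod_cast hk3
  have h4 : k < 5 := by exact_mod_cast hk4
  omega
end

section
/- Let p be an odd prime and let G be a finite group of order 4p containing a normal subgroup P of order p with G/P isomorphic to the Klein four-group C₂ × C₂. Then G is isomorphic to C_p × C₂ × C₂ or to the dihedral group of order 4p. -/
theorem aux_dihedral {G : Type} [Group G] [Finite G] {n : ℕ} (hn : 1 < n)
    {a t : G} (ha : orderOf a = n) (ht : t * t = 1) (hconj : t * a * t⁻¹ = a⁻¹)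
    (hgen : Subgroup.closure {a, t} = ⊤) (hcard : Nat.card G = 2 * n) :
    Nonempty (G ≃* DihedralGroup n) := by
  have hn0 : NeZero n := ⟨by omega⟩
  have hfact : Fact (1 < n) := ⟨hn⟩
  set zp : ZMod n → G := fun i => a ^ i.val with hzp
  have hadd : ∀ i j : ZMod n, zp (i + j) = zp i * zp j := by
    intro i j
    simp only [hzp]
    rw [ZMod.val_add, ← pow_add]
    conv_rhs => rw [← pow_mod_orderOf]
    rw [ha]
  have hzero : zp 0 = 1 := by simp [hzp]
  have hzpneg : ∀ i : ZMod n, zp (-i) = (zp i)⁻¹ := by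
    intro i
    have : zp (-i) * zp i = 1 := by rw [← hadd, neg_add_cancel, hzero]
    exact eq_inv_of_mul_eq_one_left this
  have hzpcomm : ∀ i j : ZMod n, zp i * zp j = zp j * zp i := by
    intro i j
    simp only [hzp]
    exact ((Commute.refl a).pow_pow _ _)
  have hconj' : ∀ i : ZMod n, t * zp i * t⁻¹ = (zp i)⁻¹ := by
    intro i
    have h1 : (MulAut.conj t) a = a⁻¹ := by simp [MulAut.conj_apply, hconj]
    have h2 : (MulAut.conj t) (a ^ i.val) = (a ^ i.val)⁻¹ := by
      rw [map_pow, h1, inv_pow]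
    simpa [MulAut.conj_apply] using h2
  have tinv : t⁻¹ = t := inv_eq_of_mul_eq_one_right ht
  have hcomm1 : ∀ i : ZMod n, t * zp i = (zp i)⁻¹ * t := by
    intro i
    have h := congrArg (· * t) (hconj' i)
    simpa [mul_assoc, tinv, ht] using h
  have hcomm2 : ∀ i : ZMod n, zp i * t = t * zp (-i) := by
    intro i
    rw [hcomm1 (-i), hzpneg, inv_inv]
  set f : DihedralGroup n → G := fun x => match x with
    | .r i => zp i
    | .sr i => t * zp i with hf
  have hfmul : ∀ x y : DihedralGroup n, f (x * y) = f x * f y := by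
    rintro (i | i) (j | j)
    · show zp (i + j) = zp i * zp j
      exact hadd i j
    · show t * zp (j - i) = zp i * (t * zp j)
      rw [← mul_assoc, hcomm2, mul_assoc, ← hadd, neg_add_eq_sub]
    · show t * zp (i + j) = t * zp i * zp j
      rw [mul_assoc, hadd]
    · show zp (j - i) = t * zp i * (t * zp j)
      rw [mul_assoc, ← mul_assoc (zp i), hcomm2, ← mul_assoc, ← mul_assoc, ht,
        one_mul, ← hadd, neg_add_eq_sub]
  let F : DihedralGroup n →* G := MonoidHom.mk' f hfmul
  have hFa : F (.r 1) = a := by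
    show zp 1 = a
    simp only [hzp]
    rw [ZMod.val_one, pow_one]
  have hFt : F (.sr 0) = t := by
    show t * zp 0 = t
    rw [hzero, mul_one]
  have hsurj : Function.Surjective F := by
    rw [← MonoidHom.range_eq_top]
    rw [eq_top_iff, ← hgen, Subgroup.closure_le]
    rintro x (rfl | rfl)
    · exact ⟨.r 1, hFa⟩
    · exact ⟨.sr 0, hFt⟩
  have hbij : Function.Bijective F :=
    (Nat.bijective_iff_surjective_and_card F).mpr
      ⟨hsurj, by rw [DihedralGroup.nat_card, hcard]⟩
  exact ⟨(MulEquiv.ofBijective F hbij).symm⟩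


/-- A finite group `G` of order `4p` (`p` an odd prime) with a normal subgroup `P` of order
`p` such that `G/P` is a Klein four-group is isomorphic to `C_p × C₂ × C₂` or to the
dihedral group of order `4p`. -/
theorem stmt9 (p : ℕ) (hp : p.Prime) (hodd : Odd p) (G : Type) [Group G] [Finite G]
    (hG : Nat.card G = 4 * p) (P : Subgroup G) [P.Normal] (hP : Nat.card P = p)
    (hquot : Nonempty (G ⧸ P ≃* Multiplicative (ZMod 2) × Multiplicative (ZMod 2))) :
    Nonempty (G ≃* Multiplicative (ZMod p) × Multiplicative (ZMod 2) × Multiplicative (ZMod 2))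
      ∨ Nonempty (G ≃* DihedralGroup (2 * p)) := by
  have hppos : 0 < p := hp.pos
  have hp2 : p ≠ 2 := by rintro rfl; simp [Nat.odd_iff] at hodd
  have hindex : P.index = 4 := by
    have h := Subgroup.card_mul_index P
    rw [hP, hG, mul_comm 4 p] at h
    exact Nat.eq_of_mul_eq_mul_left hppos h
  have hcop : Nat.Coprime (Nat.card P) P.index := by
    rw [hP, hindex]
    have h2 : Nat.Coprime p 2 := hp.coprime_iff_not_dvd.mpr fun h => by
      have := (Nat.prime_dvd_prime_iff_eq hp Nat.prime_two).mp h
      exact hp2 this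
    have := h2.pow_right 2
    norm_num at this
    exact this
  obtain ⟨H, hc⟩ := Subgroup.exists_right_complement'_of_coprime hcop
  have hcardH : Nat.card H = 4 := by
    have h := hc.card_mul
    rw [hP, hG, mul_comm 4 p] at h
    exact Nat.eq_of_mul_eq_mul_left hppos h
  obtain ⟨e⟩ := hquot
  have hsq : ∀ h : G, h ∈ H → h * h = 1 := by
    intro h hh
    have hall : ∀ x : Multiplicative (ZMod 2) × Multiplicative (ZMod 2), x * x = 1 := by decide
    have h1 : ((h * h : G) : G ⧸ P) = 1 := by
      apply e.injective
      rw [map_one, QuotientGroup.mk_mul, map_mul]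
      exact hall _
    have h2P : h * h ∈ P := (QuotientGroup.eq_one_iff _).mp h1
    exact Subgroup.disjoint_def.mp hc.disjoint h2P (H.mul_mem hh hh)
  -- generator of P
  have hPne : P ≠ ⊥ := by
    intro h
    rw [h, Subgroup.card_bot] at hP
    exact hp.one_lt.ne' hP.symm
  obtain ⟨a', ha1'⟩ := Subgroup.ne_bot_iff_exists_ne_one.mp hPne
  obtain ⟨a, haP⟩ := a'
  have ha1 : a ≠ 1 := by simpa [Subtype.ext_iff] using ha1'
  have haord : orderOf a = p := by
    have hdvd : orderOf (⟨a, haP⟩ : P) ∣ Nat.card P := orderOf_dvd_natCard _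
    rw [Subgroup.orderOf_mk, hP] at hdvd
    rcases (Nat.Prime.eq_one_or_self_of_dvd hp _ hdvd) with h | h
    · exact absurd (orderOf_eq_one_iff.mp h) ha1
    · exact h
  have hPz : P = Subgroup.zpowers a := by
    symm
    apply Subgroup.eq_of_le_of_card_ge ((Subgroup.zpowers_le).mpr haP)
    rw [hP, Nat.card_zpowers, haord]
  have hdi : ∀ h ∈ H, h * a * h⁻¹ = a ∨ h * a * h⁻¹ = a⁻¹ := by
    intro h hh
    have hmem : h * a * h⁻¹ ∈ P := ‹P.Normal›.conj_mem a haP h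
    rw [hPz] at hmem
    obtain ⟨k, hk⟩ := Subgroup.mem_zpowers_iff.mp hmem
    have hsq' := hsq h hh
    have c1 : h * (a ^ k) * h⁻¹ = (h * a * h⁻¹) ^ k := by
      have := map_zpow (MulAut.conj h) a k
      simpa [MulAut.conj_apply] using this.symm
    have h2 : a = a ^ (k * k) := by
      calc a = (h * h) * a * (h * h)⁻¹ := by rw [hsq']; group
      _ = h * (h * a * h⁻¹) * h⁻¹ := by group
      _ = h * (a ^ k) * h⁻¹ := by rw [hk]
      _ = (h * a * h⁻¹) ^ k := c1
      _ = (a ^ k) ^ k := by rw [hk]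
      _ = a ^ (k * k) := by rw [← zpow_mul]
    have hdvd : (p : ℤ) ∣ (k - 1) * (k + 1) := by
      have h3 : a ^ (k * k - 1) = 1 := by
        rw [zpow_sub, ← h2, zpow_one, mul_inv_cancel]
      have h4 := (orderOf_dvd_iff_zpow_eq_one).mpr h3
      rw [haord] at h4
      have : (k - 1) * (k + 1) = k * k - 1 := by ring
      rw [this]
      exact h4
    have hpint : Prime (p : ℤ) := Nat.prime_iff_prime_int.mp hp
    rcases hpint.dvd_mul.mp hdvd with h5 | h5
    · left
      have h6 : a ^ (k - 1) = 1 := by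
        rw [← orderOf_dvd_iff_zpow_eq_one, haord]; exact h5
      rw [hk.symm]
      calc a ^ k = a ^ (k - 1) * a ^ (1 : ℤ) := by rw [← zpow_add]; ring_nf
      _ = a := by rw [h6, one_mul, zpow_one]
    · right
      have h6 : a ^ (k + 1) = 1 := by
        rw [← orderOf_dvd_iff_zpow_eq_one, haord]; exact h5
      rw [hk.symm]
      calc a ^ k = a ^ (k + 1) * a ^ (-1 : ℤ) := by rw [← zpow_add]; ring_nf
      _ = a⁻¹ := by rw [h6, one_mul, zpow_neg_one]
  by_cases hcent : ∀ h ∈ H, h * a = a * h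
  · left
    have hcomm : ∀ u ∈ P, ∀ h ∈ H, Commute u h := by
      intro u hu h hh
      rw [hPz] at hu
      obtain ⟨k, hk⟩ := Subgroup.mem_zpowers_iff.mp hu
      have hca : Commute h a := hcent h hh
      exact hk ▸ (hca.zpow_right k).symm
    let φ : P × H →* G := MonoidHom.mk' (fun x => (x.1 : G) * x.2) (by
      rintro ⟨u, h⟩ ⟨v, k⟩
      show ((u * v : G)) * ((h * k : G)) = (u : G) * h * ((v : G) * k)
      have hvh : (v : G) * h = h * v := (hcomm v v.2 h h.2).eq
      calc (u : G) * v * (h * k) = (u : G) * ((v : G) * h) * k := by group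
      _ = (u : G) * (h * v) * k := by rw [hvh]
      _ = (u : G) * h * ((v : G) * k) := by group)
    have hφ : Function.Bijective φ := hc
    let e1 : P × H ≃* G := MulEquiv.ofBijective φ hφ
    haveI : Fact p.Prime := ⟨hp⟩
    haveI : NeZero p := ⟨hppos.ne'⟩
    have hMp : Nat.card (Multiplicative (ZMod p)) = p := by
      simpa using Nat.card_zmod p
    let eP : P ≃* Multiplicative (ZMod p) := mulEquivOfPrimeCardEq hP hMp
    let ψ : H →* G ⧸ P := (QuotientGroup.mk' P).comp H.subtype
    have hψinj : Function.Injective ψ := by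
      rw [← MonoidHom.ker_eq_bot_iff, eq_bot_iff]
      rintro ⟨h, hh⟩ hker
      have hmem : (h : G) ∈ P := (QuotientGroup.eq_one_iff _).mp hker
      have h1 : h = 1 := Subgroup.disjoint_def.mp hc.disjoint hmem hh
      simp [Subgroup.mem_bot, Subtype.ext_iff, h1]
    have hψbij : Function.Bijective ψ :=
      (Nat.bijective_iff_injective_and_card ψ).mpr
        ⟨hψinj, by rw [hcardH, ← Subgroup.index_eq_card, hindex]⟩
    let eH : H ≃* Multiplicative (ZMod 2) × Multiplicative (ZMod 2) :=
      (MulEquiv.ofBijective ψ hψbij).trans e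
    exact ⟨e1.symm.trans (eP.prodCongr eH)⟩
  · right
    push_neg at hcent
    obtain ⟨t, htH, htne⟩ := hcent
    have ht2 : t * t = 1 := hsq t htH
    have tinv : t⁻¹ = t := inv_eq_of_mul_eq_one_right ht2
    have hconj_comm : ∀ h : G, h * a * h⁻¹ = a → h * a = a * h := by
      intro h hh
      have := congrArg (· * h) hh
      simpa [mul_assoc] using this
    have htconj : t * a * t⁻¹ = a⁻¹ := by
      rcases hdi t htH with h | h
      · exact absurd (hconj_comm t h) htne
      · exact h
    have ht1 : t ≠ 1 := by rintro rfl; simp at htne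
    have hordt : orderOf t = 2 := orderOf_eq_prime (by rw [pow_two]; exact ht2) ht1
    have hconj_t_mul : ∀ h : G, h * a * h⁻¹ = a⁻¹ → (t * h) * a * (t * h)⁻¹ = a := by
      intro h hh
      rw [mul_inv_rev]
      calc t * h * a * (h⁻¹ * t⁻¹) = t * (h * a * h⁻¹) * t⁻¹ := by group
      _ = t * a⁻¹ * t⁻¹ := by rw [hh]
      _ = (t * a * t⁻¹)⁻¹ := by group
      _ = a := by rw [htconj, inv_inv]
    -- find z
    have hTlt : Subgroup.zpowers t < H := by
      apply lt_of_le_of_ne (Subgroup.zpowers_le.mpr htH)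
      intro hEq
      have h2' : Nat.card (Subgroup.zpowers t) = 2 := by rw [Nat.card_zpowers, hordt]
      rw [hEq, hcardH] at h2'
      norm_num at h2'
    obtain ⟨h1, hh1H, hh1T⟩ := SetLike.exists_of_lt hTlt
    obtain ⟨z, hzH, hz1, hza⟩ : ∃ z : G, z ∈ H ∧ z ≠ 1 ∧ z * a = a * z := by
      by_cases hc1 : h1 * a = a * h1
      · exact ⟨h1, hh1H, fun h => hh1T (h ▸ Subgroup.one_mem _), hc1⟩
      · have hconjh1 : h1 * a * h1⁻¹ = a⁻¹ := by
          rcases hdi h1 hh1H with h | h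
          · exact absurd (hconj_comm h1 h) hc1
          · exact h
        refine ⟨t * h1, H.mul_mem htH hh1H, ?_, ?_⟩
        · intro h
          apply hh1T
          have h1eq : h1 = t⁻¹ := eq_inv_of_mul_eq_one_right h
          rw [h1eq, tinv]
          exact Subgroup.mem_zpowers t
        · exact hconj_comm _ (hconj_t_mul h1 hconjh1)
    have hz2 : z * z = 1 := hsq z hzH
    have hordz : orderOf z = 2 := orderOf_eq_prime (by rw [pow_two]; exact hz2) hz1
    have zinv : z⁻¹ = z := inv_eq_of_mul_eq_one_right hz2
    have hzt : z * t = t * z := by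
      have h := hsq (t * z) (H.mul_mem htH hzH)
      calc z * t = z⁻¹ * t⁻¹ := by rw [zinv, tinv]
      _ = (t * z)⁻¹ := by rw [mul_inv_rev]
      _ = t * z := inv_eq_of_mul_eq_one_right h
    have hCaz : Commute a z := hza.symm
    set rr := a * z with hrr
    have hcop2 : Nat.Coprime p 2 := hp.coprime_iff_not_dvd.mpr fun h => by
      exact hp2 ((Nat.prime_dvd_prime_iff_eq hp Nat.prime_two).mp h)
    have hordr : orderOf rr = 2 * p := by
      rw [hrr, hCaz.orderOf_mul_eq_mul_orderOf_of_coprime (by rw [haord, hordz]; exact hcop2),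
        haord, hordz, mul_comm]
    have htzt : t * z * t⁻¹ = z := by rw [tinv, ← hzt, mul_assoc, ht2, mul_one]
    have hrt : t * rr * t⁻¹ = rr⁻¹ := by
      rw [hrr]
      calc t * (a * z) * t⁻¹ = (t * a * t⁻¹) * (t * z * t⁻¹) := by group
      _ = a⁻¹ * z := by rw [htconj, htzt]
      _ = (a * z)⁻¹ := by
          rw [mul_inv_rev, zinv]
          exact (hCaz.inv_left).eq
    -- generation
    have hap : a ^ p = 1 := by rw [← haord]; exact pow_orderOf_eq_one a
    have hcl : Subgroup.closure ({rr, t} : Set G) = ⊤ := by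
      rw [eq_top_iff]
      set cl := Subgroup.closure ({rr, t} : Set G) with hcldef
      have hrrcl : rr ∈ cl := Subgroup.subset_closure (by left; rfl)
      have htcl : t ∈ cl := Subgroup.subset_closure (by right; rfl)
      obtain ⟨m, hm⟩ := hodd
      have hacl : a ∈ cl := by
        have hra : rr ^ (p + 1) = a := by
          rw [hrr, hCaz.mul_pow]
          have h1 : a ^ (p + 1) = a := by rw [pow_succ, hap, one_mul]
          have h2' : z ^ (p + 1) = 1 := by
            have : p + 1 = 2 * (m + 1) := by omega
            rw [this, pow_mul, pow_two, hz2, one_pow]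
          rw [h1, h2', mul_one]
        rw [← hra]
        exact pow_mem hrrcl _
      have hzcl : z ∈ cl := by
        have : a⁻¹ * rr = z := by rw [hrr]; group
        rw [← this]
        exact mul_mem (inv_mem hacl) hrrcl
      set C := H ⊓ Subgroup.centralizer {a} with hCdef
      have hzC : z ∈ C := ⟨hzH, Subgroup.mem_centralizer_iff.mpr (by
        rintro y rfl
        exact hza.symm)⟩
      have hCeq : C = Subgroup.zpowers z := by
        have hle : Subgroup.zpowers z ≤ C := Subgroup.zpowers_le.mpr hzC
        have hdvd4 : Nat.card C ∣ 4 := hcardH ▸ Subgroup.card_dvd_of_le inf_le_left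
        have h2dvd : 2 ∣ Nat.card C := by
          have := Subgroup.card_dvd_of_le hle
          rwa [Nat.card_zpowers, hordz] at this
        have hne4 : Nat.card C ≠ 4 := by
          intro h4
          have hCH : C = H := Subgroup.eq_of_le_of_card_ge inf_le_left (by rw [h4, hcardH])
          have htC : t ∈ C := hCH ▸ htH
          exact htne (Subgroup.mem_centralizer_iff.mp htC.2 a rfl).symm
        have hC2 : Nat.card C = 2 := by
          have hCpos : 0 < Nat.card C := Nat.card_pos
          have hle4 : Nat.card C ≤ 4 := Nat.le_of_dvd (by norm_num) hdvd4
          set n := Nat.card C with hn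
          interval_cases n <;> omega
        exact (Subgroup.eq_of_le_of_card_ge hle (by rw [hC2, Nat.card_zpowers, hordz])).symm
      have hHcl : ∀ h ∈ H, h ∈ cl := by
        intro h hh
        have hCcl : ∀ g ∈ C, g ∈ cl := by
          intro g hg
          rw [hCeq] at hg
          exact Subgroup.zpowers_le.mpr hzcl hg
        by_cases hcm : h * a = a * h
        · exact hCcl h ⟨hh, Subgroup.mem_centralizer_iff.mpr (by rintro y rfl; exact hcm.symm)⟩
        · have hconjh : h * a * h⁻¹ = a⁻¹ := by
            rcases hdi h hh with h' | h'
            · exact absurd (hconj_comm h h') hcm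
            · exact h'
          have hthC : t * h ∈ C := ⟨H.mul_mem htH hh,
            Subgroup.mem_centralizer_iff.mpr (by
              rintro y rfl
              exact (hconj_comm _ (hconj_t_mul h hconjh)).symm)⟩
          have hth : (t * h : G) ∈ cl := hCcl _ hthC
          have : h = t⁻¹ * (t * h) := by group
          rw [this, tinv]
          exact mul_mem htcl hth
      intro g _
      obtain ⟨⟨u, k⟩, rfl⟩ := hc.2 g
      have huP : (u : G) ∈ Subgroup.zpowers a := by rw [← hPz]; exact u.2
      show (u : G) * (k : G) ∈ cl
      exact mul_mem (Subgroup.zpowers_le.mpr hacl huP) (hHcl k k.2)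
    have hcard2 : Nat.card G = 2 * (2 * p) := by rw [hG]; ring
    exact aux_dihedral (by omega : 1 < 2 * p) hordr ht2 hrt hcl hcard2
end

section
/- For every integer m ≥ 3, in the group G = S₃ × D_m (where D_m is the dihedral group of order 2m) there exist elements x₁, x₂, x₃ of order 2 and x₄ of order 6 such that x₁x₂x₃x₄ = 1 and x₁, x₂, x₃, x₄ generate G. -/
open Equiv DihedralGroup

/-- For every `m ≥ 3`, the group `S₃ × D_m` is generated by elements `x₁, x₂, x₃` of order 2
and `x₄` of order 6 with `x₁x₂x₃x₄ = 1`. -/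
theorem stmt16 (m : ℕ) (hm : 3 ≤ m) :
    ∃ x₁ x₂ x₃ x₄ : Equiv.Perm (Fin 3) × DihedralGroup m,
      orderOf x₁ = 2 ∧ orderOf x₂ = 2 ∧ orderOf x₃ = 2 ∧ orderOf x₄ = 6 ∧
      x₁ * x₂ * x₃ * x₄ = 1 ∧ Subgroup.closure {x₁, x₂, x₃, x₄} = ⊤ := by
  have hm0 : NeZero m := ⟨by omega⟩
  set t₁ : Perm (Fin 3) := Equiv.swap 0 1 with ht₁
  set t₂ : Perm (Fin 3) := Equiv.swap 0 2 with ht₂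
  set c : Perm (Fin 3) := t₁ * t₂ with hc
  set x₁ : Perm (Fin 3) × DihedralGroup m := (t₁, sr 0) with hx₁
  set x₂ : Perm (Fin 3) × DihedralGroup m := (t₂, sr 1) with hx₂
  set x₃ : Perm (Fin 3) × DihedralGroup m := (1, sr 0) with hx₃
  set x₄ : Perm (Fin 3) × DihedralGroup m := (c⁻¹, sr (0 - 1)) with hx₄
  have hot₁ : orderOf t₁ = 2 := by
    apply orderOf_eq_prime
    · decide
    · decide
  have hot₂ : orderOf t₂ = 2 := by
    apply orderOf_eq_prime
    · decide
    · decide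
  have hoc : orderOf c⁻¹ = 3 := by
    apply orderOf_eq_prime
    · decide
    · decide
  refine ⟨x₁, x₂, x₃, x₄, ?_, ?_, ?_, ?_, ?_, ?_⟩
  · rw [Prod.orderOf, hot₁, orderOf_sr]; decide
  · rw [Prod.orderOf, hot₂, orderOf_sr]; decide
  · rw [Prod.orderOf, orderOf_one, orderOf_sr]; decide
  · rw [Prod.orderOf, hoc, orderOf_sr]; decide
  · have : x₁ * x₂ * x₃ = x₄⁻¹ := by
      rw [hx₁, hx₂, hx₃, hx₄, Prod.ext_iff]
      constructor
      · simp [hc]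
      · show sr 0 * sr 1 * sr 0 = (sr (0 - 1))⁻¹
        rw [sr_mul_sr, r_mul_sr, sub_zero]
        rfl
    rw [this, inv_mul_cancel]
  · set H := Subgroup.closure {x₁, x₂, x₃, x₄} with hH
    have hm₁ : x₁ ∈ H := Subgroup.subset_closure (by simp)
    have hm₂ : x₂ ∈ H := Subgroup.subset_closure (by simp)
    have hm₃ : x₃ ∈ H := Subgroup.subset_closure (by simp)
    have hT₁ : ((t₁, 1) : Perm (Fin 3) × DihedralGroup m) ∈ H := by
      have h : ((t₁, 1) : Perm (Fin 3) × DihedralGroup m) = x₁ * x₃ := by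
        rw [hx₁, hx₃, Prod.ext_iff]
        refine ⟨by simp, ?_⟩
        show (1 : DihedralGroup m) = sr 0 * sr 0
        rw [sr_mul_sr, sub_self, DihedralGroup.one_def]
      rw [h]; exact mul_mem hm₁ hm₃
    have hCsr : ((c, sr 1) : Perm (Fin 3) × DihedralGroup m) ∈ H := by
      have h : ((c, sr 1) : Perm (Fin 3) × DihedralGroup m) = (t₁, 1) * x₂ := by
        rw [hx₂, Prod.ext_iff]; exact ⟨rfl, by simp⟩
      rw [h]; exact mul_mem hT₁ hm₂
    have hC2 : ((c * c, 1) : Perm (Fin 3) × DihedralGroup m) ∈ H := by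
      have h : ((c * c, 1) : Perm (Fin 3) × DihedralGroup m) = (c, sr 1) * (c, sr 1) := by
        rw [Prod.ext_iff]
        refine ⟨rfl, ?_⟩
        show (1 : DihedralGroup m) = sr 1 * sr 1
        rw [sr_mul_sr, sub_self, DihedralGroup.one_def]
      rw [h]; exact mul_mem hCsr hCsr
    have hC : ((c, 1) : Perm (Fin 3) × DihedralGroup m) ∈ H := by
      have h : ((c, 1) : Perm (Fin 3) × DihedralGroup m) = ((c * c, 1) : _)⁻¹ := by
        rw [Prod.ext_iff]
        refine ⟨?_, by simp⟩
        show c = (c * c)⁻¹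
        rw [hc, ht₁, ht₂]; decide
      rw [h]; exact inv_mem hC2
    have hT₂ : ((t₂, 1) : Perm (Fin 3) × DihedralGroup m) ∈ H := by
      have h : ((t₂, 1) : Perm (Fin 3) × DihedralGroup m) = (t₁, 1) * (c, 1) := by
        rw [Prod.ext_iff]
        refine ⟨?_, by simp⟩
        show t₂ = t₁ * c
        rw [hc, ht₁, ht₂]; decide
      rw [h]; exact mul_mem hT₁ hC
    have hsr1 : ((1, sr 1) : Perm (Fin 3) × DihedralGroup m) ∈ H := by
      have h : ((1, sr 1) : Perm (Fin 3) × DihedralGroup m) = (t₂, 1) * x₂ := by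
        rw [hx₂, Prod.ext_iff]
        refine ⟨?_, by simp⟩
        show (1 : Perm (Fin 3)) = t₂ * t₂
        rw [ht₂]; decide
      rw [h]; exact mul_mem hT₂ hm₂
    have hr1 : ((1, r 1) : Perm (Fin 3) × DihedralGroup m) ∈ H := by
      have h : ((1, r 1) : Perm (Fin 3) × DihedralGroup m) = x₃ * (1, sr 1) := by
        rw [hx₃, Prod.ext_iff]
        refine ⟨by simp, ?_⟩
        show r (1 : ZMod m) = sr 0 * sr 1
        rw [sr_mul_sr, sub_zero]
      rw [h]; exact mul_mem hm₃ hsr1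
    have hr : ∀ i : ZMod m, ((1, r i) : Perm (Fin 3) × DihedralGroup m) ∈ H := by
      intro i
      have h : ((1, r i) : Perm (Fin 3) × DihedralGroup m) = (1, r 1) ^ i.val := by
        rw [Prod.ext_iff, Prod.pow_fst, Prod.pow_snd]
        refine ⟨by simp, ?_⟩
        show r i = r (1 : ZMod m) ^ i.val
        rw [r_one_pow, ZMod.natCast_val, ZMod.cast_id]
      rw [h]; exact pow_mem hr1 _
    have hsr : ∀ i : ZMod m, ((1, sr i) : Perm (Fin 3) × DihedralGroup m) ∈ H := by
      intro i
      have h : ((1, sr i) : Perm (Fin 3) × DihedralGroup m) = x₃ * (1, r i) := by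
        rw [hx₃, Prod.ext_iff]
        refine ⟨by simp, ?_⟩
        show sr i = sr 0 * r i
        rw [sr_mul_r, zero_add]
      rw [h]; exact mul_mem hm₃ (hr i)
    have hD : ∀ d : DihedralGroup m, ((1, d) : Perm (Fin 3) × DihedralGroup m) ∈ H := by
      intro d
      cases d with
      | r i => exact hr i
      | sr i => exact hsr i
    have hS : ∀ g : Perm (Fin 3), ((g, 1) : Perm (Fin 3) × DihedralGroup m) ∈ H := by
      intro g
      have hcases : g = 1 ∨ g = t₁ ∨ g = t₂ ∨ g = c ∨ g = c * c ∨ g = c * t₁ := by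
        rw [ht₁, ht₂, hc]; revert g; decide
      have hCT : ((c * t₁, 1) : Perm (Fin 3) × DihedralGroup m) ∈ H := by
        have h : ((c * t₁, 1) : Perm (Fin 3) × DihedralGroup m) = (c, 1) * (t₁, 1) := by
          rw [Prod.ext_iff]; exact ⟨rfl, by simp⟩
        rw [h]; exact mul_mem hC hT₁
      rcases hcases with h | h | h | h | h | h <;> subst h
      · exact one_mem H
      · exact hT₁
      · exact hT₂
      · exact hC
      · exact hC2
      · exact hCT
    rw [Subgroup.eq_top_iff']
    intro x
    have h : x = (x.1, 1) * (1, x.2) := by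
      rw [Prod.ext_iff]; exact ⟨by simp, by simp⟩
    rw [h]; exact mul_mem (hS x.1) (hD x.2)
end

section
/- If a finite group G of order 48·23 has a non-normal Sylow 23-subgroup, then G acts on its 24 Sylow 23-subgroups as a doubly transitive permutation group of degree 24 in which the stabilizer of a point has order 46 and the stabilizer of two distinct points has order 2. -/
open MulAction

section Aux

variable {G : Type} [Group G] [Finite G]

lemma aux_arith : ∀ n : ℕ, n ∣ 48 → n % 23 = 1 → n = 1 ∨ n = 24 := by
  intro n hd hm
  have := Nat.le_of_dvd (by norm_num) hd
  interval_cases n <;> omega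

omit [Finite G] in
/-- distinct Sylow 23-subgroups: one is not fixed by the other -/
lemma aux_not_fixed [Fact (Nat.Prime 23)] {P Q : Sylow 23 G} (hne : Q ≠ P) :
    Q ∉ fixedPoints (P : Subgroup G) (Sylow 23 G) := by
  intro hfix
  rw [P.2.sylow_mem_fixedPoints_iff] at hfix
  exact hne (Sylow.ext (P.3 Q.2 hfix))

lemma aux_compl (h24 : Nat.card (Sylow 23 G) = 24) (P : Sylow 23 G) :
    {R : Sylow 23 G | R ≠ P}.ncard = 23 := by
  have hcompl : {R : Sylow 23 G | R ≠ P} = ({P} : Set (Sylow 23 G))ᶜ := by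
    ext R; simp
  have := Set.ncard_add_ncard_compl ({P} : Set (Sylow 23 G))
  rw [Set.ncard_singleton, h24] at this
  rw [hcompl]; omega

/-- The orbit of `Q ≠ P` under `P` is everything except `P`. -/
lemma aux_orbit [Fact (Nat.Prime 23)] (h24 : Nat.card (Sylow 23 G) = 24)
    (hcardP : ∀ P : Sylow 23 G, Nat.card (P : Subgroup G) = 23)
    {P Q : Sylow 23 G} (hne : Q ≠ P) :
    orbit (P : Subgroup G) Q = {R : Sylow 23 G | R ≠ P} := by
  have hsub : orbit (P : Subgroup G) Q ⊆ {R : Sylow 23 G | R ≠ P} := by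
    rintro R ⟨x, rfl⟩ hRP
    have hx : (x : G) • P = P :=
      Sylow.smul_eq_iff_mem_normalizer.mpr (Subgroup.le_normalizer x.2)
    have : (x : G) • Q = (x : G) • P := by
      rw [hx]; exact hRP
    exact hne (smul_left_cancel _ this)
  have horb : (orbit (P : Subgroup G) Q).ncard = 23 := by
    have hdvd : (orbit (P : Subgroup G) Q).ncard ∣ 23 := by
      rw [← MulAction.index_stabilizer]
      have := Subgroup.index_dvd_card (H := stabilizer (P : Subgroup G) Q)
      rwa [hcardP P] at this
    rcases (Nat.Prime.eq_one_or_self_of_dvd (by norm_num) _ hdvd) with h1 | h23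
    · exfalso
      obtain ⟨a, ha⟩ := Set.ncard_eq_one.mp h1
      have hQa : Q = a := by
        have := mem_orbit_self (M := ↥(P : Subgroup G)) Q
        rw [ha] at this; exact this
      refine aux_not_fixed hne (mem_fixedPoints.mpr fun m => ?_)
      have : m • Q ∈ orbit (P : Subgroup G) Q := mem_orbit _ _
      rw [ha] at this
      rw [this, ← hQa]
    · exact h23
  exact Set.eq_of_subset_of_ncard_le hsub
    (by rw [aux_compl h24 P, horb]) (Set.toFinite _)

end Aux

/-- If a finite group of order `48·23` has a non-normal Sylow 23-subgroup, then it has 24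
Sylow 23-subgroups, acts doubly transitively on them by conjugation, point stabilizers
have order 46, and two-point stabilizers have order 2. -/
theorem stmt17 (G : Type) [Group G] [Finite G] (hG : Nat.card G = 48 * 23)
    (h : ∃ P : Sylow 23 G, ¬ (P : Subgroup G).Normal) :
    Nat.card (Sylow 23 G) = 24 ∧
    (∀ P₁ P₂ Q₁ Q₂ : Sylow 23 G, P₁ ≠ P₂ → Q₁ ≠ Q₂ → ∃ g : G, g • P₁ = Q₁ ∧ g • P₂ = Q₂) ∧
    (∀ P₁ : Sylow 23 G, Nat.card (MulAction.stabilizer G P₁) = 46) ∧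
    (∀ P₁ P₂ : Sylow 23 G, P₁ ≠ P₂ →
      Nat.card ↥(MulAction.stabilizer G P₁ ⊓ MulAction.stabilizer G P₂) = 2) := by
  haveI hp : Fact (Nat.Prime 23) := ⟨by norm_num⟩
  obtain ⟨P₀, hP₀⟩ := h
  -- card of each Sylow is 23
  have hcardP : ∀ P : Sylow 23 G, Nat.card (P : Subgroup G) = 23 := by
    intro P
    rw [Sylow.card_eq_multiplicity, hG]
    rw [show (48 * 23 : ℕ) = 23 * 48 by norm_num,
      Nat.factorization_mul (by norm_num) (by norm_num),
      Nat.Prime.factorization (by norm_num)]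
    simp [Nat.factorization_eq_zero_of_not_dvd (by norm_num : ¬ (23:ℕ) ∣ 48)]
  -- index of each Sylow is 48
  have hidx : (P₀ : Subgroup G).index = 48 := by
    have := Subgroup.card_mul_index (P₀ : Subgroup G)
    rw [hcardP P₀, hG] at this
    omega
  -- number of Sylows is 24
  have h24 : Nat.card (Sylow 23 G) = 24 := by
    have hdvd : Nat.card (Sylow 23 G) ∣ 48 := hidx ▸ Sylow.card_dvd_index P₀
    have hmod : Nat.card (Sylow 23 G) % 23 = 1 := card_sylow_modEq_one 23 G
    rcases aux_arith _ hdvd hmod with h1 | h24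
    · exfalso
      haveI : Subsingleton (Sylow 23 G) := (Nat.card_eq_one_iff_unique.mp h1).1
      refine hP₀ (Subgroup.normalizer_eq_top_iff.mp ?_)
      ext g
      simp only [Subgroup.mem_top, iff_true]
      exact Sylow.smul_eq_iff_mem_normalizer.mp (Subsingleton.elim _ _)
    · exact h24
  -- stabilizer = normalizer has card 46
  have hstab : ∀ P : Sylow 23 G, Nat.card (MulAction.stabilizer G P) = 46 := by
    intro P
    have hi : (MulAction.stabilizer G P).index = 24 := by
      rw [MulAction.index_stabilizer_of_transitive, h24]
    have := Subgroup.card_mul_index (MulAction.stabilizer G P)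
    rw [hi, hG] at this
    omega
  refine ⟨h24, ?_, hstab, ?_⟩
  · -- double transitivity
    intro P₁ P₂ Q₁ Q₂ h12 hq12
    obtain ⟨g, hg⟩ := MulAction.exists_smul_eq G P₁ Q₁
    have hR : g • P₂ ≠ Q₁ := by
      rw [← hg]
      intro hc
      exact h12 (smul_left_cancel g hc).symm
    have hmem : Q₂ ∈ orbit (Q₁ : Subgroup G) (g • P₂) := by
      rw [aux_orbit h24 hcardP hR]
      exact hq12.symm
    obtain ⟨x, hx⟩ := hmem
    refine ⟨(x : G) * g, ?_, ?_⟩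
    · rw [mul_smul, hg]
      exact Sylow.smul_eq_iff_mem_normalizer.mpr (Subgroup.le_normalizer x.2)
    · rw [mul_smul]
      exact hx
  · -- two-point stabilizers
    intro P₁ P₂ h12
    -- orbit of P₂ under the stabilizer of P₁ is everything except P₁
    have horbS : (orbit (MulAction.stabilizer G P₁) P₂).ncard = 23 := by
      have hsub1 : orbit (P₁ : Subgroup G) P₂ ⊆ orbit (MulAction.stabilizer G P₁) P₂ := by
        rintro R ⟨x, rfl⟩
        have hxS : (x : G) ∈ MulAction.stabilizer G P₁ := by
          rw [Sylow.stabilizer_eq_normalizer]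
          exact Subgroup.le_normalizer x.2
        exact ⟨⟨x, hxS⟩, rfl⟩
      have hsub2 : orbit (MulAction.stabilizer G P₁) P₂ ⊆ {R : Sylow 23 G | R ≠ P₁} := by
        rintro R ⟨x, rfl⟩ hRP
        have hx : (x : G) • P₁ = P₁ := x.2
        have : (x : G) • P₂ = (x : G) • P₁ := by rw [hx]; exact hRP
        exact h12 (smul_left_cancel _ this).symm
      have hge : 23 ≤ (orbit (MulAction.stabilizer G P₁) P₂).ncard := by
        have := Set.ncard_le_ncard hsub1 (Set.toFinite _)
        rwa [aux_orbit h24 hcardP (Ne.symm h12), aux_compl h24 P₁] at this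
      have hle := Set.ncard_le_ncard hsub2 (Set.toFinite _)
      rw [aux_compl h24 P₁] at hle
      omega
    have hi : (stabilizer (MulAction.stabilizer G P₁) P₂).index = 23 := by
      rw [MulAction.index_stabilizer, horbS]
    have hc2 : Nat.card (stabilizer (MulAction.stabilizer G P₁) P₂) = 2 := by
      have := Subgroup.card_mul_index (stabilizer (MulAction.stabilizer G P₁) P₂)
      rw [hi, hstab P₁] at this
      omega
    have e : ↥(MulAction.stabilizer G P₁ ⊓ MulAction.stabilizer G P₂) ≃
        ↥(stabilizer (MulAction.stabilizer G P₁) P₂) :=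
      { toFun := fun g => ⟨⟨g.1, g.2.1⟩, g.2.2⟩
        invFun := fun g => ⟨g.1.1, g.1.2, g.2⟩
        left_inv := fun _ => rfl
        right_inv := fun _ => rfl }
    rw [Nat.card_congr e, hc2]
end
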